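/- Let 𝒟 ⊆ 𝒞 be subcategories of 𝓑 satisfying condition (RCP), ℋ := CoCone(𝒞,𝒞), and let ℋ/𝒞 be the heart of (𝒞,𝒞^⊥¹). If f̄ : Y → X is an epimorphism in the heart ℋ/𝒞 (X, Y ∈ ℋ) and Y ∈ 𝒟^⊥¹, then X ∈ 𝒟^⊥¹. In other words, the full subcategory 𝒜 of ℋ/𝒞 on the objects of ℋ∩𝒟^⊥¹ is closed under epimorphic images in the heart. -/

import Mathlib

open CategoryTheory Category Limits ZeroObject

universe v u

namespace CotorsionPaper

variable {B : Type u} [Category.{v} B] [Abelian B]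

/-- `f, g` form a short exact sequence `0 → X → Y → Z → 0`. -/
def IsSES {X Y Z : B} (f : X ⟶ Y) (g : Y ⟶ Z) : Prop :=
  ∃ w : f ≫ g = 0, (ShortComplex.mk f g w).ShortExact

/-- `Ext¹(X, Y) = 0`: every short exact sequence `0 → Y → E → X → 0` splits. -/
def Ext1Zero (X Y : B) : Prop :=
  ∀ ⦃E : B⦄ (i : Y ⟶ E) (p : E ⟶ X), IsSES i p → ∃ s : X ⟶ E, s ≫ p = 𝟙 X

/-- `Ext²(X, Y) = 0`, via dimension shifting: `Ext¹(K, Y) = 0` for any syzygy `K` of `X`. -/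
def Ext2Zero (X Y : B) : Prop :=
  ∀ ⦃K P : B⦄ (i : K ⟶ P) (p : P ⟶ X), Projective P → IsSES i p → Ext1Zero K Y

/-- A (strictly) full additive subcategory: closed under isomorphisms,
contains a zero object and is closed under finite direct sums. -/
structure AddSubcat (S : Set B) : Prop where
  zero_mem : (0 : B) ∈ S
  iso_closed : ∀ ⦃X Y : B⦄, (X ≅ Y) → X ∈ S → Y ∈ S
  sum_closed : ∀ ⦃X Y : B⦄, X ∈ S → Y ∈ S → (X ⊞ Y) ∈ S

/-- `S` is closed under direct summands (retracts). -/
def ClosedUnderSummands (S : Set B) : Prop :=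
  ∀ ⦃X Y : B⦄ (r : X ⟶ Y) (s : Y ⟶ X), s ≫ r = 𝟙 Y → X ∈ S → Y ∈ S

/-- `S` is rigid: `Ext¹(X, Y) = 0` for all `X, Y ∈ S`. -/
def Rigid (S : Set B) : Prop :=
  ∀ ⦃X⦄, X ∈ S → ∀ ⦃Y⦄, Y ∈ S → Ext1Zero X Y

/-- `S^⊥¹`. -/
def rightPerp (S : Set B) : Set B := {Y | ∀ ⦃X⦄, X ∈ S → Ext1Zero X Y}

/-- `^⊥¹S`. -/
def leftPerp (S : Set B) : Set B := {X | ∀ ⦃Y⦄, Y ∈ S → Ext1Zero X Y}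

/-- `f : X ⟶ A` is a right `S`-approximation of `A`. -/
def IsRightApprox (S : Set B) {X A : B} (f : X ⟶ A) : Prop :=
  X ∈ S ∧ ∀ ⦃X' : B⦄, X' ∈ S → ∀ g : X' ⟶ A, ∃ h : X' ⟶ X, h ≫ f = g

def ContravariantlyFinite (S : Set B) : Prop :=
  ∀ A : B, ∃ (X : B) (f : X ⟶ A), IsRightApprox S f

/-- `f : A ⟶ X` is a left `S`-approximation of `A`. -/
def IsLeftApprox (S : Set B) {A X : B} (f : A ⟶ X) : Prop :=
  X ∈ S ∧ ∀ ⦃X' : B⦄, X' ∈ S → ∀ g : A ⟶ X', ∃ h : X ⟶ X', f ≫ h = g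

def CovariantlyFinite (S : Set B) : Prop :=
  ∀ A : B, ∃ (X : B) (f : A ⟶ X), IsLeftApprox S f

/-- `(U, V)` is a cotorsion pair. -/
structure CotorsionPair (U V : Set B) : Prop where
  summands_left : ClosedUnderSummands U
  summands_right : ClosedUnderSummands V
  ext : ∀ ⦃X⦄, X ∈ U → ∀ ⦃Y⦄, Y ∈ V → Ext1Zero X Y
  resol : ∀ X : B, ∃ (VX UX : B) (i : VX ⟶ UX) (p : UX ⟶ X),
    VX ∈ V ∧ UX ∈ U ∧ IsSES i p
  coresol : ∀ X : B, ∃ (VX UX : B) (i : X ⟶ VX) (p : VX ⟶ UX),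
    VX ∈ V ∧ UX ∈ U ∧ IsSES i p

/-- `CoCone(S, T)`. -/
def CoCone (S T : Set B) : Set B :=
  {X | ∃ (B' B'' : B) (i : X ⟶ B') (p : B' ⟶ B''), B' ∈ S ∧ B'' ∈ T ∧ IsSES i p}

/-- `Cone(S, T)`. -/
def Cone (S T : Set B) : Set B :=
  {X | ∃ (B' B'' : B) (i : B' ⟶ B'') (p : B'' ⟶ X), B' ∈ S ∧ B'' ∈ T ∧ IsSES i p}

/-- The subcategory `𝒫` of projective objects. -/
def projSet : Set B := {P | Projective P}

/-- The subcategory `ℐ` of injective objects. -/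
def injSet : Set B := {I | Injective I}

/-- `Ω𝒞`, the (first) syzygy of `𝒞`. -/
def Syz (C : Set B) : Set B := CoCone projSet C

/-- Condition (RCP): `𝒫 ⊆ 𝒞`, `𝒞` rigid, contravariantly finite,
closed under direct summands (and a full additive subcategory). -/
structure RCP (C : Set B) : Prop where
  add : AddSubcat C
  proj_mem : ∀ ⦃P : B⦄, Projective P → P ∈ C
  rigid : Rigid C
  contra : ContravariantlyFinite C
  summands : ClosedUnderSummands C

/-- The category structure on the full subcategory on a set `H` (instance search no longer sees
`Set B` as `ObjectProperty B`). -/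
instance (H : Set B) : Category.{v} (ObjectProperty.FullSubcategory H) :=
  ObjectProperty.FullSubcategory.category H

/-- `f` factors through an object of `S`. -/
def FactorsThru (S : Set B) {X Y : B} (f : X ⟶ Y) : Prop :=
  ∃ (Z : B) (g : X ⟶ Z) (h : Z ⟶ Y), Z ∈ S ∧ g ≫ h = f

/-- The ideal of morphisms of the full subcategory on `H` factoring through an object of `S`. -/
def idealRel (H S : Set B) : HomRel (ObjectProperty.FullSubcategory H) :=
  fun X Y f g => FactorsThru S (show X.obj ⟶ Y.obj from f.hom - g.hom)

/-- The ideal quotient `H/S`. -/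
abbrev HeartCat (H S : Set B) := CategoryTheory.Quotient (idealRel H S)

/-- The quotient functor `H → H/S`. -/
abbrev heartQ (H S : Set B) : ObjectProperty.FullSubcategory H ⥤ HeartCat H S :=
  CategoryTheory.Quotient.functor _

/-- The zero morphism in the ideal quotient `H/S`. -/
def heartZero (H S : Set B) (X Y : HeartCat H S) : X ⟶ Y :=
  (heartQ H S).map (ObjectProperty.homMk (0 : X.as.obj ⟶ Y.as.obj))

/-- `κ` is a kernel of `φ` in the ideal quotient `H/S`. -/
structure IsKernelArrow {H S : Set B} {K X Y : HeartCat H S}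
    (κ : K ⟶ X) (φ : X ⟶ Y) : Prop where
  w : κ ≫ φ = heartZero H S K Y
  lift : ∀ ⦃T : HeartCat H S⦄ (t : T ⟶ X), t ≫ φ = heartZero H S T Y →
    ∃! u : T ⟶ K, u ≫ κ = t

/-- `π` is a cokernel of `φ` in the ideal quotient `H/S`. -/
structure IsCokernelArrow {H S : Set B} {X Y Q : HeartCat H S}
    (φ : X ⟶ Y) (π : Y ⟶ Q) : Prop where
  w : φ ≫ π = heartZero H S X Q
  desc : ∀ ⦃T : HeartCat H S⦄ (t : Y ⟶ T), φ ≫ t = heartZero H S X T →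
    ∃! u : Q ⟶ T, π ≫ u = t

/-- The class of epimorphisms in `H/S` whose kernel object lies in `A`. -/
def epiClassWithKernelIn (H S A : Set B) : MorphismProperty (HeartCat H S) :=
  fun X Y φ => Epi φ ∧ ∃ (K : HeartCat H S) (κ : K ⟶ X),
    K.as.obj ∈ A ∧ IsKernelArrow κ φ

/-- The class of monomorphisms in `H/S` whose cokernel object lies in `A`. -/
def monoClassWithCokernelIn (H S A : Set B) : MorphismProperty (HeartCat H S) :=
  fun X Y φ => Mono φ ∧ ∃ (Q : HeartCat H S) (π : Y ⟶ Q),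
    Q.as.obj ∈ A ∧ IsCokernelArrow φ π

/-- The diagram `(⋄)` associated with a morphism `f : Y ⟶ X`. -/
structure DiamondDiagram {Y X : B} (f : Y ⟶ X) {OmX PX Z₁ IY SgY Z₂ : B}
    (q : OmX ⟶ PX) (p : PX ⟶ X) (j : OmX ⟶ Z₁) (g : Z₁ ⟶ Y)
    (i : Y ⟶ IY) (c : IY ⟶ SgY) (h : X ⟶ Z₂) (e : Z₂ ⟶ SgY)
    (u : Z₁ ⟶ PX) (v : IY ⟶ Z₂) : Prop where
  projPX : Projective PX
  injIY : Injective IY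
  ses_proj : IsSES q p
  ses_pullback : IsSES j g
  ses_inj : IsSES i c
  ses_pushout : IsSES h e
  comm₁ : j ≫ u = q
  comm₂ : u ≫ p = g ≫ f
  comm₃ : f ≫ h = i ≫ v
  comm₄ : v ≫ e = c

/-- The class of morphisms `f : Y ⟶ X` admitting a diagram `(⋄)` with
`Z₁ ∈ ZCond` and `h` factoring through an object of `HCond`. -/
def Rclass (ZCond HCond : Set B) : MorphismProperty B :=
  fun Y X f => ∃ (OmX PX Z₁ IY SgY Z₂ : B) (q : OmX ⟶ PX) (p : PX ⟶ X)
    (j : OmX ⟶ Z₁) (g : Z₁ ⟶ Y) (i : Y ⟶ IY) (c : IY ⟶ SgY)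
    (h : X ⟶ Z₂) (e : Z₂ ⟶ SgY) (u : Z₁ ⟶ PX) (v : IY ⟶ Z₂),
    DiamondDiagram f q p j g i c h e u v ∧ Z₁ ∈ ZCond ∧ FactorsThru HCond h

/-- The class of morphisms `f : Y ⟶ X` admitting a diagram `(⋄)` with
`g` factoring through an object of `GCond` and `h` through an object of `HCond`. -/
def RtildeClass (GCond HCond : Set B) : MorphismProperty B :=
  fun Y X f => ∃ (OmX PX Z₁ IY SgY Z₂ : B) (q : OmX ⟶ PX) (p : PX ⟶ X)
    (j : OmX ⟶ Z₁) (g : Z₁ ⟶ Y) (i : Y ⟶ IY) (c : IY ⟶ SgY)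
    (h : X ⟶ Z₂) (e : Z₂ ⟶ SgY) (u : Z₁ ⟶ PX) (v : IY ⟶ Z₂),
    DiamondDiagram f q p j g i c h e u v ∧ FactorsThru GCond g ∧ FactorsThru HCond h

/-- The objects of the heart `ℋ` of a cotorsion pair `(U, V)`. -/
def HeartObjects (U V : Set B) : Set B :=
  {X | (∃ (VX UX : B) (i : VX ⟶ UX) (p : UX ⟶ X),
          IsSES i p ∧ VX ∈ V ∧ UX ∈ U ∩ V) ∧
       (∃ (VX UX : B) (i : X ⟶ VX) (p : VX ⟶ UX),
          IsSES i p ∧ VX ∈ U ∩ V ∧ UX ∈ U)}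

/-!
Push the sequence `0 → Y → D₁ → D₂ → 0` (with `D₁, D₂ ∈ 𝒞`) out along `f` to get
`0 → X → M → D₂ → 0`. Pushing `0 → X → C₁ → C₂ → 0` out along `X → M` gives
`0 → M → N → C₂ → 0`, where `N` is an extension of `D₂` by `C₁`, so `N ≅ C₁ ⊕ D₂ ∈ 𝒞` by rigidity
and `M ∈ ℋ`. Since `f ≫ (X → M)` factors through `D₁` and `f̄` is epi,
`X → M` factors through `𝒞`. For `W ∈ 𝒟 ⊆ 𝒞` rigidity then kills the image of `Ext¹(W, X)` in
`Ext¹(W, M)`, while the connecting map `Hom(W, D₂) → Ext¹(W, X)` factors through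
`Ext¹(W, Y) = 0`; hence `Ext¹(W, X) = 0`.
-/

namespace IsSES

variable {X Y Z : B} {f : X ⟶ Y} {g : Y ⟶ Z}

theorem comp_eq_zero (h : IsSES f g) : f ≫ g = 0 := h.1

theorem mono (h : IsSES f g) : Mono f := h.2.mono_f

theorem epi (h : IsSES f g) : Epi g := h.2.epi_g

theorem exists_lift (h : IsSES f g) {A : B} (k : A ⟶ Y) (hk : k ≫ g = 0) :
    ∃ l : A ⟶ X, l ≫ f = k :=
  have := h.mono
  h.2.exact.lift' k hk

theorem exists_desc (h : IsSES f g) {A : B} (k : Y ⟶ A) (hk : f ≫ k = 0) :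
    ∃ l : Z ⟶ A, g ≫ l = k :=
  have := h.epi
  h.2.exact.desc' k hk

theorem exists_retraction_of_section (h : IsSES f g) {s : Z ⟶ Y} (hs : s ≫ g = 𝟙 Z) :
    ∃ r : Y ⟶ X, f ≫ r = 𝟙 X :=
  ⟨_, (ShortComplex.Splitting.ofExactOfSection _ h.2.exact s hs h.mono).f_r⟩

theorem exists_section_of_retraction (h : IsSES f g) {r : Y ⟶ X} (hr : f ≫ r = 𝟙 X) :
    ∃ s : Z ⟶ Y, s ≫ g = 𝟙 Z :=
  ⟨_, (ShortComplex.Splitting.ofExactOfRetraction _ h.2.exact r hr h.epi).s_g⟩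

theorem nonempty_iso_biprod_of_section (h : IsSES f g) {s : Z ⟶ Y} (hs : s ≫ g = 𝟙 Z) :
    Nonempty (Y ≅ X ⊞ Z) :=
  ⟨(ShortComplex.Splitting.ofExactOfSection _ h.2.exact s hs h.mono).isoBinaryBiproduct⟩

theorem exists_isSES_pushout_inl (h : IsSES f g) {A : B} (α : X ⟶ A) :
    ∃ m : pushout α f ⟶ Z, pushout.inr α f ≫ m = g ∧ IsSES (pushout.inl α f) m := by
  have hw : α ≫ 0 = f ≫ g := by rw [comp_zero, h.comp_eq_zero]
  refine ⟨pushout.desc 0 g hw, pushout.inr_desc _ _ _, pushout.inl_desc _ _ _, ?_⟩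
  have := h.mono
  have := h.epi
  have : Epi (pushout.desc 0 g hw) := epi_of_epi_fac (pushout.inr_desc _ _ hw)
  refine .mk' ?_ inferInstance inferInstance
  rw [ShortComplex.exact_iff_exact_up_to_refinements]
  intro T x hx
  obtain ⟨T', π, _, xA, xY, hπ⟩ :=
    (IsPushout.of_hasPushout α f).hom_eq_add_up_to_refinements x
  have hxY : xY ≫ g = 0 := by
    have := π ≫= hx
    rwa [← assoc, hπ, Preadditive.add_comp, assoc, assoc, pushout.inl_desc, pushout.inr_desc,
      comp_zero, comp_zero, zero_add] at this
  obtain ⟨T'', π', _, xX, hπ'⟩ := h.2.exact.exact_up_to_refinements xY hxY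
  refine ⟨T'', π' ≫ π, epi_comp _ _, π' ≫ xA + xX ≫ α, ?_⟩
  simp [hπ, reassoc_of% hπ', pushout.condition]

theorem exists_isSES_pullback_snd (h : IsSES f g) {W : B} (s : W ⟶ Z) :
    ∃ ι : X ⟶ pullback g s, ι ≫ pullback.fst g s = f ∧ IsSES ι (pullback.snd g s) := by
  have hw : f ≫ g = 0 ≫ s := by rw [zero_comp, h.comp_eq_zero]
  refine ⟨pullback.lift f 0 hw, pullback.lift_fst _ _ _, pullback.lift_snd _ _ _, ?_⟩
  have := h.mono
  have := h.epi
  have : Mono (pullback.lift f 0 hw) := mono_of_mono_fac (pullback.lift_fst _ _ hw)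
  refine .mk' ?_ inferInstance inferInstance
  rw [ShortComplex.exact_iff_exact_up_to_refinements]
  intro T x hx
  have hxg : (x ≫ pullback.fst g s) ≫ g = 0 := by
    rw [assoc, pullback.condition, ← assoc]
    exact hx ▸ zero_comp
  obtain ⟨T', π, _, xX, hπ⟩ := h.2.exact.exact_up_to_refinements _ hxg
  refine ⟨T', π, inferInstance, xX, pullback.hom_ext ?_ ?_⟩
  · simpa only [assoc, pullback.lift_fst] using hπ
  · simpa only [assoc, pullback.lift_snd, comp_zero] using π ≫= hx

theorem exists_extension_of_ext1Zero (h : IsSES f g) {A : B} (hext : Ext1Zero Z A)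
    (α : X ⟶ A) : ∃ γ : Y ⟶ A, f ≫ γ = α := by
  obtain ⟨_, -, hP⟩ := h.exists_isSES_pushout_inl α
  obtain ⟨s, hs⟩ := hext _ _ hP
  obtain ⟨ρ, hρ⟩ := hP.exists_retraction_of_section hs
  exact ⟨pushout.inr α f ≫ ρ, by rw [← assoc, ← pushout.condition, assoc, hρ, comp_id]⟩

theorem exists_lift_of_ext1Zero (h : IsSES f g) {W : B} (hext : Ext1Zero W X) (t : W ⟶ Z) :
    ∃ l : W ⟶ Y, l ≫ g = t := by
  obtain ⟨_, -, hP⟩ := h.exists_isSES_pullback_snd t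
  obtain ⟨s, hs⟩ := hext _ _ hP
  exact ⟨s ≫ pullback.fst g t, by rw [assoc, pullback.condition, ← assoc, hs, id_comp]⟩

/-- The retraction of `i` is `q` with `q ≫ f = φ - p ≫ ζ`, where `ζ` lifts the map `W ⟶ Z`
induced by `φ ≫ g`. -/
theorem exists_section_of_extension (h : IsSES f g) {E W : B} {i : X ⟶ E} {p : E ⟶ W}
    (hE : IsSES i p) {φ : E ⟶ Y} (hφ : i ≫ φ = f) (hlift : ∀ t : W ⟶ Z, ∃ ζ : W ⟶ Y, ζ ≫ g = t) :
    ∃ s : W ⟶ E, s ≫ p = 𝟙 W := by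
  obtain ⟨t, ht⟩ := hE.exists_desc (φ ≫ g) (by rw [← assoc, hφ, h.comp_eq_zero])
  obtain ⟨ζ, hζ⟩ := hlift t
  obtain ⟨q, hq⟩ := h.exists_lift (φ - p ≫ ζ) (by
    rw [Preadditive.sub_comp, assoc, hζ, ht, sub_self])
  refine hE.exists_section_of_retraction (r := q) ?_
  have := h.mono
  rw [← cancel_mono f, assoc, hq, Preadditive.comp_sub, hφ, ← assoc, hE.comp_eq_zero, zero_comp,
    sub_zero, id_comp]

end IsSES

theorem congruence_idealRel (H S : Set B) (hS : AddSubcat S) : Congruence (idealRel H S) where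
  equivalence :=
    { refl := fun _ => ⟨0, 0, 0, hS.zero_mem, by simp⟩
      symm := fun ⟨Z, u, v, hZ, huv⟩ =>
        ⟨Z, -u, v, hZ, by rw [Preadditive.neg_comp, huv, neg_sub]⟩
      trans := fun ⟨Z₁, u₁, v₁, hZ₁, e₁⟩ ⟨Z₂, u₂, v₂, hZ₂, e₂⟩ =>
        ⟨Z₁ ⊞ Z₂, biprod.lift u₁ u₂, biprod.desc v₁ v₂, hS.sum_closed hZ₁ hZ₂, by
          rw [biprod.lift_desc, e₁, e₂, sub_add_sub_cancel]⟩ }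
  comp_left := fun f _ _ ⟨Z, u, v, hZ, e⟩ =>
    ⟨Z, f.hom ≫ u, v, hZ, by rw [assoc, e, Preadditive.comp_sub]; rfl⟩
  comp_right := fun g ⟨Z, u, v, hZ, e⟩ =>
    ⟨Z, u, v ≫ g.hom, hZ, by rw [← assoc, e, Preadditive.sub_comp]; rfl⟩

theorem factorsThru_of_epi_of_factorsThru_comp {H S : Set B} (hS : AddSubcat S)
    {Y X Z : ObjectProperty.FullSubcategory H} (f : Y ⟶ X) (g : X ⟶ Z)
    (hf : Epi ((heartQ H S).map f)) (hfg : FactorsThru S (f.hom ≫ g.hom)) :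
    FactorsThru S g.hom := by
  have := congruence_idealRel H S hS
  have hzero : (heartQ H S).map f ≫ (heartQ H S).map g =
      (heartQ H S).map f ≫ (heartQ H S).map (ObjectProperty.homMk 0) := by
    rw [← Functor.map_comp, ← Functor.map_comp]
    refine CategoryTheory.Quotient.sound _ (show FactorsThru S (f.hom ≫ g.hom - f.hom ≫ 0) from ?_)
    rwa [comp_zero, sub_zero]
  have hg : FactorsThru S (g.hom - 0) :=
    (Quotient.functor_map_eq_iff _ _ _).1 ((cancel_epi _).1 hzero)
  rwa [sub_zero] at hg

theorem mem_coCone_of_isSES {C : Set B} (hC : AddSubcat C) (hrigid : Rigid C) {X M Q : B}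
    (hX : X ∈ CoCone C C) {h : X ⟶ M} {m : M ⟶ Q} (hM : IsSES h m) (hQ : Q ∈ C) :
    M ∈ CoCone C C := by
  obtain ⟨C₁, C₂, a, b, hC₁, hC₂, hab⟩ := hX
  obtain ⟨_, -, hN⟩ := hM.exists_isSES_pushout_inl a
  obtain ⟨s, hs⟩ := hrigid hQ hC₁ _ _ hN
  obtain ⟨e⟩ := hN.nonempty_iso_biprod_of_section hs
  obtain ⟨b', -, hN'⟩ := hab.exists_isSES_pushout_inl h
  exact ⟨_, C₂, _, b', hC.iso_closed (e.symm ≪≫ pushoutSymmetry a h) (hC.sum_closed hC₁ hQ),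
    hC₂, hN'⟩

theorem statement_8_general {B : Type u} [Category.{v} B] [Abelian B]
    (C D : Set B) (hC : RCP C) (hDC : D ⊆ C)
    {Y X : B} (hY : Y ∈ CoCone C C) (hX : X ∈ CoCone C C) (f : Y ⟶ X)
    (hepi : Epi ((heartQ (CoCone C C) C).map (X := ⟨Y, hY⟩) (Y := ⟨X, hX⟩) (ObjectProperty.homMk f)))
    (hYD : Y ∈ rightPerp D) :
    X ∈ rightPerp D := by
  obtain ⟨D₁, D₂, a, b, hD₁, hD₂, hab⟩ := id hY
  obtain ⟨m, hm, hM⟩ := hab.exists_isSES_pushout_inl f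
  have hMH : pushout f a ∈ CoCone C C := mem_coCone_of_isSES hC.add hC.rigid hX hM hD₂
  obtain ⟨Z, α, β, hZ, hαβ⟩ : FactorsThru C (pushout.inl f a) :=
    factorsThru_of_epi_of_factorsThru_comp hC.add _
      (ObjectProperty.homMk (pushout.inl f a) : (⟨X, hX⟩ : ObjectProperty.FullSubcategory _) ⟶
        ⟨_, hMH⟩) hepi
      ⟨D₁, a, pushout.inr f a, hD₁, pushout.condition.symm⟩
  intro W hW E i p hE
  obtain ⟨γ, hγ⟩ := hE.exists_extension_of_ext1Zero (hC.rigid (hDC hW) hZ) α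
  refine hM.exists_section_of_extension hE (φ := γ ≫ β) (by rw [← assoc, hγ, hαβ]) fun t => ?_
  obtain ⟨l, hl⟩ := hab.exists_lift_of_ext1Zero (hYD hW) t
  exact ⟨l ≫ pushout.inr f a, by rw [assoc, hm, hl]⟩

/-- `𝒜` is closed under epimorphic images in the heart. -/
theorem statement_8 {B : Type u} [Category.{v} B] [Abelian B]
    [EnoughProjectives B] [EnoughInjectives B]
    (C D : Set B) (hC : RCP C) (hD : RCP D) (hDC : D ⊆ C)
    {Y X : B} (hY : Y ∈ CoCone C C) (hX : X ∈ CoCone C C) (f : Y ⟶ X)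
    (hepi : Epi ((heartQ (CoCone C C) C).map (X := ⟨Y, hY⟩) (Y := ⟨X, hX⟩) (ObjectProperty.homMk f)))
    (hYD : Y ∈ rightPerp D) :
    X ∈ rightPerp D :=
  statement_8_general C D hC hDC hY hX f hepi hYD

end CotorsionPaper
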